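/- Let m, k be positive integers with 2m−1 < R(m−k, 3) and m ≥ k+3. Then F_v(2_r; r−k+1) ≤ r+m for all r ≥ m−1. -/

import Mathlib

/-- The chromatic number of `G` as a natural number. -/
noncomputable def chi {V : Type*} (G : SimpleGraph V) : ℕ := G.chromaticNumber.toNat

/-- The independence number of `G`: the clique number of the complement. -/
noncomputable def indepNum {V : Type*} (G : SimpleGraph V) : ℕ := Gᶜ.cliqueNum

/-- The vertex Folkman number `F_v(2_r; q)`: the minimum number of vertices of a
graph with clique number `< q` and chromatic number `≥ r + 1`. -/
noncomputable def Fv (r q : ℕ) : ℕ :=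
  sInf {n | ∃ G : SimpleGraph (Fin n), G.cliqueNum < q ∧ r + 1 ≤ chi G}

/-- The Ramsey number `R(p, 3)`: the least `n` such that every graph on at least `n`
vertices contains a `p`-clique or an independent set of size `3`. -/
noncomputable def RamseyTri (p : ℕ) : ℕ :=
  sInf {n | ∀ m, n ≤ m → ∀ G : SimpleGraph (Fin m),
    (∃ S : Finset (Fin m), G.IsNClique p S) ∨ (∃ S : Finset (Fin m), Gᶜ.IsNClique 3 S)}

/-! A graph `H` on `2m - 1` vertices witnessing `2m - 1 < R(m - k, 3)` has clique number
`< m - k` and independence number `≤ 2`, so every colouring of it uses at least `m` colours.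
Its join with a complete graph on `r + 1 - m` vertices then has `r + m` vertices, clique number
at most `r - k`, and chromatic number at least `r + 1`. -/

open Finset

namespace SimpleGraph

variable {V W : Type*}

def join (G : SimpleGraph V) (H : SimpleGraph W) : SimpleGraph (V ⊕ W) where
  Adj
    | .inl a, .inl b => G.Adj a b
    | .inr a, .inr b => H.Adj a b
    | _, _ => True
  symm := ⟨by rintro (a | a) (b | b) h <;> simp_all [adj_comm]⟩
  loopless := ⟨by rintro (a | a) h <;> simp_all⟩

section Join

variable {G : SimpleGraph V} {H : SimpleGraph W}

@[simp] lemma join_adj_inl_inl {a b : V} : (G.join H).Adj (.inl a) (.inl b) ↔ G.Adj a b := .rfl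
@[simp] lemma join_adj_inr_inr {a b : W} : (G.join H).Adj (.inr a) (.inr b) ↔ H.Adj a b := .rfl
@[simp] lemma join_adj_inl_inr {a : V} {b : W} : (G.join H).Adj (.inl a) (.inr b) := trivial

lemma cliqueNum_join_le [Finite V] [Finite W] :
    (G.join H).cliqueNum ≤ G.cliqueNum + H.cliqueNum := by
  obtain ⟨s, hs⟩ := (G.join H).exists_isNClique_cliqueNum
  have hl : G.IsClique (s.toLeft : Set V) := fun a ha b hb hab =>
    hs.isClique (mem_toLeft.mp ha) (mem_toLeft.mp hb) (Sum.inl_injective.ne hab)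
  have hr : H.IsClique (s.toRight : Set W) := fun a ha b hb hab =>
    hs.isClique (mem_toRight.mp ha) (mem_toRight.mp hb) (Sum.inr_injective.ne hab)
  rw [← hs.card_eq, ← card_toLeft_add_card_toRight]
  exact add_le_add hl.card_le_cliqueNum hr.card_le_cliqueNum

lemma Colorable.exists_add_le_of_join {n : ℕ} (h : (G.join H).Colorable n) :
    ∃ a b, a + b ≤ n ∧ G.Colorable a ∧ H.Colorable b := by
  classical
  obtain ⟨C⟩ := h
  let A : Finset (Fin n) := {i | ∃ v, C (.inl v) = i}
  have hAG : G.Coloring A := Coloring.mk (fun v => ⟨C (.inl v), by simp [A]⟩)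
    fun hab => by simpa using C.valid (join_adj_inl_inl.mpr hab)
  have hAH : H.Coloring (Aᶜ : Finset (Fin n)) := Coloring.mk
    (fun w => ⟨C (.inr w), by
      simpa [A] using fun v hvw => C.valid (join_adj_inl_inr (a := v) (b := w)) hvw⟩)
    fun hab => by simpa using C.valid (join_adj_inr_inr.mpr hab)
  refine ⟨#A, #Aᶜ, (card_add_card_compl A).le.trans (by simp), ?_, ?_⟩
  · simpa only [Fintype.card_coe] using hAG.colorable
  · simpa only [Fintype.card_coe] using hAH.colorable

end Join

lemma CliqueFree.cliqueNum_lt {G : SimpleGraph V} {n : ℕ} (h : G.CliqueFree n) :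
    G.cliqueNum < n :=
  lt_of_not_ge fun hn => h.mono hn _ G.exists_isNClique_cliqueNum.choose_spec

lemma cliqueNum_le_card [Fintype V] (G : SimpleGraph V) : G.cliqueNum ≤ Fintype.card V := by
  obtain ⟨s, hs⟩ := G.exists_isNClique_cliqueNum
  exact hs.card_eq ▸ s.card_le_univ

lemma Embedding.cliqueNum_le [Finite W] {G : SimpleGraph V} {H : SimpleGraph W} (f : G ↪g H) :
    G.cliqueNum ≤ H.cliqueNum := by
  obtain ⟨s, hs⟩ := G.exists_isNClique_cliqueNum
  have hmap : H.IsClique (s.map f.toEmbedding : Set W) := by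
    rintro _ ha _ hb hab
    simp only [coe_map, Set.mem_image, mem_coe] at ha hb
    obtain ⟨x, hx, rfl⟩ := ha
    obtain ⟨y, hy, rfl⟩ := hb
    exact f.map_adj_iff.mpr (hs.isClique hx hy (ne_of_apply_ne _ hab))
  simpa [hs.card_eq] using hmap.card_le_cliqueNum

lemma Colorable.card_le_mul_indepNum [Fintype V] {G : SimpleGraph V} {n : ℕ}
    (h : G.Colorable n) : Fintype.card V ≤ n * G.indepNum := by
  classical
  obtain ⟨C⟩ := h
  calc Fintype.card V = ∑ i, #{v | C v = i} := card_eq_sum_card_fiberwise (by simp)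
    _ ≤ ∑ _i : Fin n, G.indepNum := sum_le_sum fun i _ =>
        IsIndepSet.card_le_indepNum fun v hv w hw hvw hadj => C.valid hadj (by simp_all)
    _ = n * G.indepNum := by simp

end SimpleGraph

open SimpleGraph

lemma fv_le_card {V : Type*} [Fintype V] {G : SimpleGraph V} {r q : ℕ}
    (hclique : G.cliqueNum < q) (hcolor : ∀ n, G.Colorable n → r + 1 ≤ n) :
    Fv r q ≤ Fintype.card V := by
  let e := Fintype.equivFin V
  refine Nat.sInf_le ⟨G.map e.toEmbedding, ?_, hcolor _ ?_⟩
  · exact (Iso.map e G).symm.toEmbedding.cliqueNum_le.trans_lt hclique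
  · exact (G.map e.toEmbedding).colorable_chromaticNumber_of_fintype.of_hom (Iso.map e G).toHom

lemma exists_cliqueFree_compl_cliqueFree_of_lt_ramseyTri {n p : ℕ} (h : n < RamseyTri p) :
    ∃ H : SimpleGraph (Fin n), H.CliqueFree p ∧ Hᶜ.CliqueFree 3 := by
  have := Nat.notMem_of_lt_sInf h
  simp only [Set.mem_ofPred_eq, not_forall, not_or, not_exists] at this
  obtain ⟨N, hN, G, hp, h3⟩ := this
  let f := Embedding.comap (Fin.castLEEmb hN) G
  exact ⟨G.comap (Fin.castLEEmb hN), CliqueFree.comap f.isContained hp,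
    CliqueFree.comap (Embedding.complEquiv f).isContained h3⟩

theorem stmt11_general (m k : ℕ) (hmk : k + 3 ≤ m)
    (hR : 2 * m - 1 < RamseyTri (m - k)) :
    ∀ r, m - 1 ≤ r → Fv r (r - k + 1) ≤ r + m := by
  obtain ⟨H, hHclique, hHindep⟩ := exists_cliqueFree_compl_cliqueFree_of_lt_ramseyTri hR
  have hω : H.cliqueNum < m - k := hHclique.cliqueNum_lt
  have hα : H.indepNum ≤ 2 := by
    simpa [Nat.lt_succ_iff] using hHindep.cliqueNum_lt
  intro r hr
  set t := r + 1 - m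
  have hcard : Fintype.card (Fin t ⊕ Fin (2 * m - 1)) = r + m := by
    rw [Fintype.card_sum, Fintype.card_fin, Fintype.card_fin]; omega
  rw [← hcard]
  apply fv_le_card (G := (⊤ : SimpleGraph (Fin t)).join H)
  · calc ((⊤ : SimpleGraph (Fin t)).join H).cliqueNum
        ≤ (⊤ : SimpleGraph (Fin t)).cliqueNum + H.cliqueNum := cliqueNum_join_le
      _ ≤ t + H.cliqueNum := by simpa using cliqueNum_le_card (⊤ : SimpleGraph (Fin t))
      _ < r - k + 1 := by omega
  · intro n hn
    obtain ⟨a, b, hab, ha, hb⟩ := hn.exists_add_le_of_join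
    have ht : t ≤ a := by simpa using ha.card_le_of_pairwise_adj id fun _ _ h => h
    have hm : 2 * m - 1 ≤ b * 2 := by
      simpa using hb.card_le_mul_indepNum.trans (Nat.mul_le_mul_left b hα)
    omega

theorem stmt11 (m k : ℕ) (hm : 1 ≤ m) (hk : 1 ≤ k) (hmk : k + 3 ≤ m)
    (hR : 2 * m - 1 < RamseyTri (m - k)) :
    ∀ r, m - 1 ≤ r → Fv r (r - k + 1) ≤ r + m :=
  stmt11_general m k hmk hR
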